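/- arXiv:1105.0335 — 3 statements merged into one kernel-verified Lean document; each statement's English description precedes it below -/
import Mathlib

section
/- Let a, b, c > 0 with c - a - b > 0. Then the Gauss hypergeometric series F(a,b,c;z) = 1 + (Γ(c)/(Γ(a)Γ(b))) Σ_{k≥1} Γ(a+k)Γ(b+k) z^k / (Γ(c+k) k!) converges at z = 1 and F(a,b,c;1) = Γ(c)Γ(c-a-b)/(Γ(c-a)Γ(c-b)) (Gauss's summation theorem). -/
/-!
Euler's argument. For `c > b > 0` the beta integral gives
`Γ(c) Γ(b+k) / (Γ(b) Γ(c+k)) = ∫₀¹ x^(b+k-1) (1-x)^(c-b-1) dx / B(b, c-b)`,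
so the hypergeometric series at `1` is the integral of `x^(b-1) (1-x)^(c-b-1) / B(b, c-b)`
against the binomial series `Σ (a)ₖ xᵏ / k! = (1-x)^(-a)`. All terms are nonnegative, so
monotone convergence allows termwise integration, and the result is `B(b, c-a-b) / B(b, c-b)`;
its finiteness is the convergence of the series.
-/

open Real

/-- The Gauss hypergeometric series
`F(a,b,c;z) = Σ_{k≥0} (Γ(a+k)Γ(b+k)Γ(c))/(Γ(a)Γ(b)Γ(c+k)) z^k / k!`. -/
noncomputable def hypergeomF (a b c z : ℝ) : ℝ :=
  ∑' k : ℕ, Real.Gamma (a + k) * Real.Gamma (b + k) * Real.Gamma c /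
    (Real.Gamma a * Real.Gamma b * Real.Gamma (c + k)) * z ^ k / (Nat.factorial k)

open MeasureTheory Set
open scoped Nat

theorem MeasureTheory.hasSum_integral_of_nonneg {α : Type*} [MeasurableSpace α]
    {μ : Measure α} {f : ℕ → α → ℝ} {g : α → ℝ} (hf : ∀ k, Integrable (f k) μ)
    (hg : Integrable g μ) (hf_nonneg : ∀ k, 0 ≤ᵐ[μ] f k)
    (hfg : ∀ᵐ x ∂μ, HasSum (fun k ↦ f k x) (g x)) :
    HasSum (fun k ↦ ∫ x, f k x ∂μ) (∫ x, g x ∂μ) := by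
  rw [hasSum_iff_tendsto_nat_of_nonneg fun k ↦ integral_nonneg_of_ae (hf_nonneg k)]
  simp_rw [← integral_finsetSum _ fun k _ ↦ hf k]
  refine integral_tendsto_of_tendsto_of_monotone
    (fun n ↦ integrable_finsetSum _ fun k _ ↦ hf k) hg ?_ ?_
  · filter_upwards [ae_all_iff.2 hf_nonneg] with x hx
    exact monotone_nat_of_le_succ fun n ↦ by simpa [Finset.sum_range_succ] using hx n
  · filter_upwards [hfg] with x hx
    exact hx.tendsto_sum_nat

theorem Real.Gamma_add_nat_eq_ascPochhammer_mul {a : ℝ} (ha : ∀ m : ℕ, a ≠ -m) (n : ℕ) :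
    Gamma (a + n) = (ascPochhammer ℝ n).eval a * Gamma a := by
  induction n with
  | zero => simp
  | succ n ih =>
    have hn : a + n ≠ 0 := fun h ↦ ha n (by linarith)
    rw [Nat.cast_succ, ← add_assoc, Gamma_add_one hn, ih, ascPochhammer_succ_eval]
    ring

theorem Ring.choose_add_sub_one_eq_ascPochhammer_div {R : Type*} [Field R] [CharZero R] {a : R}
    (n : ℕ) : Ring.choose (a + n - 1) n = (ascPochhammer R n).eval a / n ! := by
  rw [Ring.choose_eq_smul, Polynomial.descPochhammer_smeval_eq_ascPochhammer,
    Polynomial.ascPochhammer_smeval_cast, Polynomial.ascPochhammer_smeval_eq_eval, smul_eq_mul]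
  ring_nf

theorem Real.hasSum_Gamma_div_mul_pow {a t : ℝ} (ha : ∀ m : ℕ, a ≠ -m) (ht : |t| < 1) :
    HasSum (fun k : ℕ ↦ Gamma (a + k) / (Gamma a * k !) * t ^ k) ((1 - t) ^ (-a)) := by
  have h := (one_div_one_sub_rpow_hasFPowerSeriesOnBall_zero a).hasSum (y := t)
    (by simpa [enorm_eq_nnnorm, ← NNReal.coe_lt_coe] using ht)
  have hcoeff : ∀ k : ℕ, Ring.choose (a + k - 1) k = Gamma (a + k) / (Gamma a * k !) := by
    intro k
    rw [Ring.choose_add_sub_one_eq_ascPochhammer_div, Gamma_add_nat_eq_ascPochhammer_mul ha]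
    field_simp [Gamma_ne_zero ha]
  simp only [FormalMultilinearSeries.ofScalars_apply_eq, zero_add, hcoeff, smul_eq_mul] at h
  rwa [rpow_neg (by linarith [le_abs_self t]), ← one_div]

theorem Complex.ofReal_rpow_mul_one_sub_rpow {u v x : ℝ} (hx₀ : 0 ≤ x) (hx₁ : x ≤ 1) :
    ((x ^ (u - 1) * (1 - x) ^ (v - 1) : ℝ) : ℂ) =
      (x : ℂ) ^ ((u : ℂ) - 1) * (1 - (x : ℂ)) ^ ((v : ℂ) - 1) := by
  rw [ofReal_mul, ofReal_cpow hx₀, ofReal_cpow (by linarith)]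
  push_cast
  rfl

theorem Real.integrableOn_rpow_mul_one_sub_rpow {u v : ℝ} (hu : 0 < u) (hv : 0 < v) :
    IntegrableOn (fun x : ℝ ↦ x ^ (u - 1) * (1 - x) ^ (v - 1)) (Ioo 0 1) := by
  have h := Complex.betaIntegral_convergent (u := u) (v := v) (by simpa) (by simpa)
  rw [intervalIntegrable_iff_integrableOn_Ioc_of_le zero_le_one] at h
  have h_re : IntegrableOn
      (fun x : ℝ ↦ ((x : ℂ) ^ ((u : ℂ) - 1) * (1 - (x : ℂ)) ^ ((v : ℂ) - 1)).re)
      (Ioc 0 1) := h.re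
  refine (h_re.mono_set Ioo_subset_Ioc_self).congr_fun (fun x hx ↦ ?_) measurableSet_Ioo
  dsimp only
  rw [← Complex.ofReal_rpow_mul_one_sub_rpow hx.1.le hx.2.le, Complex.ofReal_re]

theorem Real.integral_rpow_mul_one_sub_rpow {u v : ℝ} (hu : 0 < u) (hv : 0 < v) :
    ∫ x in Ioo (0 : ℝ) 1, x ^ (u - 1) * (1 - x) ^ (v - 1) =
      Gamma u * Gamma v / Gamma (u + v) := by
  have h := Complex.betaIntegral_eq_Gamma_mul_div u v (by simpa) (by simpa)
  rw [Complex.betaIntegral, intervalIntegral.integral_of_le zero_le_one,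
    integral_Ioc_eq_integral_Ioo, ← setIntegral_congr_fun measurableSet_Ioo fun x hx ↦
      Complex.ofReal_rpow_mul_one_sub_rpow hx.1.le hx.2.le, integral_complex_ofReal,
    ← Complex.ofReal_add, Complex.Gamma_ofReal, Complex.Gamma_ofReal,
    Complex.Gamma_ofReal] at h
  exact_mod_cast h

theorem Real.hasSum_Gamma_div_mul_beta {a b c : ℝ} (ha : 0 < a) (hb : 0 < b)
    (hcab : 0 < c - a - b) :
    HasSum (fun k : ℕ ↦ Gamma (a + k) / (Gamma a * k !) *
        (Gamma (b + k) * Gamma (c - b) / Gamma (c + k)))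
      (Gamma b * Gamma (c - a - b) / Gamma (c - a)) := by
  have hcb : 0 < c - b := by linarith
  have ha_nat : ∀ m : ℕ, a ≠ -m := fun m ↦ by linarith [m.cast_nonneg (α := ℝ)]
  have hsum : ∀ x ∈ Ioo (0 : ℝ) 1, HasSum
      (fun k : ℕ ↦ Gamma (a + k) / (Gamma a * k !) * (x ^ (b + k - 1) * (1 - x) ^ (c - b - 1)))
      (x ^ (b - 1) * (1 - x) ^ (c - a - b - 1)) := by
    intro x ⟨hx₀, hx₁⟩
    have h := (hasSum_Gamma_div_mul_pow ha_nat (abs_lt.2 ⟨by linarith, hx₁⟩)).mul_right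
      (x ^ (b - 1) * (1 - x) ^ (c - b - 1))
    have hterm : ∀ k : ℕ,
        Gamma (a + k) / (Gamma a * k !) * x ^ k * (x ^ (b - 1) * (1 - x) ^ (c - b - 1)) =
          Gamma (a + k) / (Gamma a * k !) * (x ^ (b + k - 1) * (1 - x) ^ (c - b - 1)) :=
      fun k ↦ by
        rw [show b + k - 1 = b - 1 + k by ring, rpow_add_natCast hx₀.ne']
        ring
    have hval : (1 - x) ^ (-a) * (x ^ (b - 1) * (1 - x) ^ (c - b - 1)) =
        x ^ (b - 1) * (1 - x) ^ (c - a - b - 1) := by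
      rw [mul_left_comm, ← rpow_add (by linarith)]
      ring_nf
    simpa only [hterm, hval] using h
  have key := hasSum_integral_of_nonneg (μ := volume.restrict (Ioo 0 1))
    (f := fun (k : ℕ) x ↦
      Gamma (a + k) / (Gamma a * k !) * (x ^ (b + k - 1) * (1 - x) ^ (c - b - 1)))
    (fun k ↦ (integrableOn_rpow_mul_one_sub_rpow (by positivity) hcb).const_mul _)
    (integrableOn_rpow_mul_one_sub_rpow hb hcab)
    (fun k ↦ ae_restrict_of_forall_mem measurableSet_Ioo fun x ⟨hx₀, hx₁⟩ ↦ by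
      have : 0 < 1 - x := by linarith
      positivity)
    (ae_restrict_of_forall_mem measurableSet_Ioo hsum)
  have hbeta : ∀ k : ℕ, ∫ x in Ioo (0 : ℝ) 1, x ^ (b + k - 1) * (1 - x) ^ (c - b - 1) =
      Gamma (b + k) * Gamma (c - b) / Gamma (c + k) := fun k ↦ by
    rw [integral_rpow_mul_one_sub_rpow (by positivity) hcb, show b + k + (c - b) = c + k by ring]
  simpa only [integral_const_mul, hbeta, integral_rpow_mul_one_sub_rpow hb hcab,
    add_sub_cancel] using key

theorem gauss_summation_general (a b c : ℝ) (ha : 0 < a) (hb : 0 < b)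
    (h : 0 < c - a - b) :
    Summable (fun k : ℕ => Real.Gamma (a + k) * Real.Gamma (b + k) * Real.Gamma c /
        (Real.Gamma a * Real.Gamma b * Real.Gamma (c + k)) * (1 : ℝ) ^ k /
        (Nat.factorial k)) ∧
      hypergeomF a b c 1 =
        Real.Gamma c * Real.Gamma (c - a - b) /
          (Real.Gamma (c - a) * Real.Gamma (c - b)) := by
  have hΓb : Gamma b ≠ 0 := (Gamma_pos_of_pos hb).ne'
  have hΓcb : Gamma (c - b) ≠ 0 := (Gamma_pos_of_pos (by linarith)).ne'
  have hs := (hasSum_Gamma_div_mul_beta ha hb h).mul_left (Gamma c / (Gamma b * Gamma (c - b)))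
  have hterm : ∀ k : ℕ, Gamma c / (Gamma b * Gamma (c - b)) *
      (Gamma (a + k) / (Gamma a * k !) * (Gamma (b + k) * Gamma (c - b) / Gamma (c + k))) =
        Gamma (a + k) * Gamma (b + k) * Gamma c / (Gamma a * Gamma b * Gamma (c + k)) *
          (1 : ℝ) ^ k / k ! := fun k ↦ by
    rw [one_pow]
    field_simp
  have hval : Gamma c / (Gamma b * Gamma (c - b)) *
      (Gamma b * Gamma (c - a - b) / Gamma (c - a)) =
        Gamma c * Gamma (c - a - b) / (Gamma (c - a) * Gamma (c - b)) := by
    field_simp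
  simp only [hterm, hval] at hs
  exact ⟨hs.summable, hs.tsum_eq⟩

/-- Gauss's summation theorem: if `c - a - b > 0` the hypergeometric series converges at
`z = 1` and `F(a,b,c;1) = Γ(c)Γ(c-a-b)/(Γ(c-a)Γ(c-b))`. -/
theorem gauss_summation (a b c : ℝ) (ha : 0 < a) (hb : 0 < b) (hc : 0 < c)
    (h : 0 < c - a - b) :
    Summable (fun k : ℕ => Real.Gamma (a + k) * Real.Gamma (b + k) * Real.Gamma c /
        (Real.Gamma a * Real.Gamma b * Real.Gamma (c + k)) * (1 : ℝ) ^ k /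
        (Nat.factorial k)) ∧
      hypergeomF a b c 1 =
        Real.Gamma c * Real.Gamma (c - a - b) /
          (Real.Gamma (c - a) * Real.Gamma (c - b)) :=
  gauss_summation_general a b c ha hb h
end

section
/- For n = 3 and 2 ≤ β < 3, the solution w(z) = F((β-1)/4, (3-β)/4, 1/2; z) + α √z F((1+β)/4, (5-β)/4, 3/2; z) of the hypergeometric problem remains bounded as z → 1⁻ if and only if α = -H(3,β) = - Γ(1/2)Γ((β+1)/4)Γ((5-β)/4) / (Γ(3/2)Γ((β-1)/4)Γ((3-β)/4)). -/
/-!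
For `c = a + b` with `a, b > 0` the coefficients `c_k` of `F(a, b; c; z)` satisfy
`(k + 1) c_{k+1} - k c_k = c_k a b / (a + b + k) > 0`, and by Euler's limit formula for `Γ`
the increasing sequence `k c_k` converges to `K = Γ(a + b) / (Γ(a) Γ(b))`, at rate `O(1 / k)`.
Hence `∑ (K / k - c_k)` converges, and `F(a, b; a + b; z) + K log (1 - z)` stays bounded on
`[0, 1)`. Writing `G_i = F_i + K_i log (1 - z)`, we get
`w = G₁ + α √z G₂ - (K₁ + α K₂ √z) log (1 - z)`, which is bounded as `z → 1⁻` exactly when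
`K₁ + α K₂ = 0`: otherwise the last term blows up, and if `K₁ + α K₂ = 0` it equals
`-K₁ (1 - √z) log (1 - z) → 0`. The condition `K₁ + α K₂ = 0` is `α = -H(3, β)`.
-/

open Real Filter

open Finset Asymptotics Topology
open scoped Nat

theorem Real.Gamma_add_nat_eq_mul_prod {s : ℝ} (hs : 0 < s) (n : ℕ) :
    Gamma (s + n) = Gamma s * ∏ j ∈ range n, (s + j) := by
  induction n with
  | zero => simp
  | succ n ih =>
    rw [prod_range_succ, Nat.cast_succ, ← add_assoc, Gamma_add_one (by positivity), ih]
    ring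

noncomputable def hypergeomCoeff (a b c : ℝ) (k : ℕ) : ℝ :=
  (∏ j ∈ range k, (a + j)) * (∏ j ∈ range k, (b + j)) / ((∏ j ∈ range k, (c + j)) * k !)

@[simp]
theorem hypergeomCoeff_zero (a b c : ℝ) : hypergeomCoeff a b c 0 = 1 := by
  simp [hypergeomCoeff]

theorem hypergeomF_eq_tsum {a b c : ℝ} (ha : 0 < a) (hb : 0 < b) (hc : 0 < c) (z : ℝ) :
    hypergeomF a b c z = ∑' k, hypergeomCoeff a b c k * z ^ k := by
  refine tsum_congr fun k ↦ ?_
  have := (Gamma_pos_of_pos ha).ne'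
  have := (Gamma_pos_of_pos hb).ne'
  have := (Gamma_pos_of_pos hc).ne'
  have : ∏ j ∈ range k, (c + j) ≠ 0 := prod_ne_zero_iff.2 fun j _ ↦ by positivity
  simp only [hypergeomCoeff, Gamma_add_nat_eq_mul_prod ha, Gamma_add_nat_eq_mul_prod hb,
    Gamma_add_nat_eq_mul_prod hc]
  field_simp

section Coefficients

variable {a b c : ℝ}

theorem hypergeomCoeff_pos (ha : 0 < a) (hb : 0 < b) (hc : 0 < c) (k : ℕ) :
    0 < hypergeomCoeff a b c k := by
  unfold hypergeomCoeff
  have hprod (s : ℝ) (hs : 0 < s) : 0 < ∏ j ∈ range k, (s + j) :=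
    prod_pos fun j _ ↦ by positivity
  have := hprod a ha
  have := hprod b hb
  have := hprod c hc
  positivity

theorem hypergeomCoeff_succ (hc : 0 < c) (k : ℕ) :
    hypergeomCoeff a b c (k + 1) =
      hypergeomCoeff a b c k * ((a + k) * (b + k) / ((c + k) * (k + 1))) := by
  have : ∏ j ∈ range k, (c + j) ≠ 0 := prod_ne_zero_iff.2 fun j _ ↦ by positivity
  have : c + k ≠ 0 := by positivity
  simp only [hypergeomCoeff, prod_range_succ, Nat.factorial_succ, Nat.cast_mul, Nat.cast_succ]
  field_simp

end Coefficients

noncomputable def hypergeomLogCoeff (a b : ℝ) : ℝ :=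
  Gamma (a + b) / (Gamma a * Gamma b)

section LogarithmicCase

variable {a b : ℝ}

theorem hypergeomLogCoeff_pos (ha : 0 < a) (hb : 0 < b) : 0 < hypergeomLogCoeff a b := by
  have := Gamma_pos_of_pos ha
  have := Gamma_pos_of_pos hb
  have := Gamma_pos_of_pos (add_pos ha hb)
  unfold hypergeomLogCoeff
  positivity

theorem natCast_mul_hypergeomCoeff_succ_sub (ha : 0 < a) (hb : 0 < b) (k : ℕ) :
    (k + 1 : ℕ) * hypergeomCoeff a b (a + b) (k + 1) - k * hypergeomCoeff a b (a + b) k =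
      hypergeomCoeff a b (a + b) k * (a * b / (a + b + k)) := by
  have : a + b + k ≠ 0 := by positivity
  rw [hypergeomCoeff_succ (add_pos ha hb)]
  push_cast
  field_simp
  ring

theorem monotone_natCast_mul_hypergeomCoeff (ha : 0 < a) (hb : 0 < b) :
    Monotone fun k : ℕ ↦ k * hypergeomCoeff a b (a + b) k := by
  refine monotone_nat_of_le_succ fun k ↦ sub_nonneg.1 ?_
  rw [natCast_mul_hypergeomCoeff_succ_sub ha hb]
  have := hypergeomCoeff_pos ha hb (add_pos ha hb) k
  positivity

theorem natCast_mul_hypergeomCoeff_succ_eq_GammaSeq (ha : 0 < a) (hb : 0 < b) {n : ℕ}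
    (hn : n ≠ 0) : (n + 1 : ℕ) * hypergeomCoeff a b (a + b) (n + 1) =
      GammaSeq (a + b) n / (GammaSeq a n * GammaSeq b n) := by
  have hn : (0 : ℝ) < n := by positivity
  have hprod (s : ℝ) (hs : 0 < s) : ∏ j ∈ range (n + 1), (s + j) ≠ 0 :=
    prod_ne_zero_iff.2 fun j _ ↦ by positivity
  have := hprod a ha
  have := hprod b hb
  have := hprod (a + b) (add_pos ha hb)
  have := (rpow_pos_of_pos hn a).ne'
  have := (rpow_pos_of_pos hn b).ne'
  simp only [hypergeomCoeff, GammaSeq, rpow_add hn, Nat.factorial_succ, Nat.cast_mul]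
  field_simp

theorem tendsto_natCast_mul_hypergeomCoeff (ha : 0 < a) (hb : 0 < b) :
    Tendsto (fun k : ℕ ↦ k * hypergeomCoeff a b (a + b) k) atTop (𝓝 (hypergeomLogCoeff a b)) := by
  refine (tendsto_add_atTop_iff_nat 1).1 ?_
  have := (Gamma_pos_of_pos ha).ne'
  have := (Gamma_pos_of_pos hb).ne'
  refine ((GammaSeq_tendsto_Gamma _).div ((GammaSeq_tendsto_Gamma a).mul
    (GammaSeq_tendsto_Gamma b)) (by positivity)).congr' ?_
  filter_upwards [eventually_ne_atTop 0] with n hn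
  exact (natCast_mul_hypergeomCoeff_succ_eq_GammaSeq ha hb hn).symm

theorem natCast_mul_hypergeomCoeff_le (ha : 0 < a) (hb : 0 < b) (k : ℕ) :
    k * hypergeomCoeff a b (a + b) k ≤ hypergeomLogCoeff a b :=
  (monotone_natCast_mul_hypergeomCoeff ha hb).ge_of_tendsto
    (tendsto_natCast_mul_hypergeomCoeff ha hb) k

/-- Each increment `(j + 1) c_{j+1} - j c_j` is at most `K a b / j²`, which telescopes against
`2 K a b (1 / j - 1 / (j + 1))`. -/
theorem hypergeomLogCoeff_sub_natCast_mul_hypergeomCoeff_le (ha : 0 < a) (hb : 0 < b) {k : ℕ}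
    (hk : k ≠ 0) : hypergeomLogCoeff a b - k * hypergeomCoeff a b (a + b) k ≤
      2 * hypergeomLogCoeff a b * a * b / k := by
  set K := hypergeomLogCoeff a b
  set d : ℕ → ℝ := fun k ↦ k * hypergeomCoeff a b (a + b) k
  have hK : 0 < K := hypergeomLogCoeff_pos ha hb
  have step (j : ℕ) (hj : j ≠ 0) : d (j + 1) + 2 * K * a * b / (j + 1 : ℕ) ≤
      d j + 2 * K * a * b / j := by
    have hj : (1 : ℝ) ≤ j := by exact_mod_cast Nat.one_le_iff_ne_zero.2 hj
    have hcj : hypergeomCoeff a b (a + b) j ≤ K / j := by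
      rw [le_div_iff₀ (by positivity), mul_comm]
      exact natCast_mul_hypergeomCoeff_le ha hb j
    have hinc := natCast_mul_hypergeomCoeff_succ_sub ha hb j
    have hinc_le : hypergeomCoeff a b (a + b) j * (a * b / (a + b + j)) ≤ K / j * (a * b / j) := by
      gcongr
      linarith
    have htel : K / j * (a * b / j) ≤ 2 * K * a * b / j - 2 * K * a * b / (j + 1 : ℕ) := by
      push_cast
      rw [div_sub_div _ _ (by positivity) (by positivity), div_mul_div_comm,
        div_le_div_iff₀ (by positivity) (by positivity)]
      have : 0 ≤ K * (a * b) * j * j * (j - 1) := by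
        have : 0 ≤ (j : ℝ) - 1 := by linarith
        positivity
      nlinarith
    simp only [d]
    linarith
  have hanti : Antitone fun m ↦ d (k + m) + 2 * K * a * b / (k + m : ℕ) :=
    antitone_nat_of_succ_le fun m ↦ step (k + m) (by omega)
  have hlim : Tendsto (fun m ↦ d (k + m) + 2 * K * a * b / (k + m : ℕ)) atTop (𝓝 (K + 0)) := by
    simpa only [Function.comp_def, Nat.add_comm] using
      ((tendsto_natCast_mul_hypergeomCoeff ha hb).comp (tendsto_add_atTop_nat k)).add
        ((tendsto_const_div_atTop_nhds_zero_nat _).comp (tendsto_add_atTop_nat k))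
  have := hanti.le_of_tendsto hlim 0
  simp only [add_zero] at this
  linarith

theorem hypergeomCoeff_succ_le (ha : 0 < a) (hb : 0 < b) (k : ℕ) :
    hypergeomCoeff a b (a + b) (k + 1) ≤ hypergeomLogCoeff a b / (k + 1) := by
  rw [le_div_iff₀ (by positivity), mul_comm]
  exact_mod_cast natCast_mul_hypergeomCoeff_le ha hb (k + 1)

theorem summable_hypergeomLogCoeff_div_sub_hypergeomCoeff (ha : 0 < a) (hb : 0 < b) :
    Summable fun k : ℕ ↦ hypergeomLogCoeff a b / (k + 1) - hypergeomCoeff a b (a + b) (k + 1) := by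
  set K := hypergeomLogCoeff a b
  have hinv : Summable fun k : ℕ ↦ 1 / ((k : ℝ) + 1) ^ 2 := by
    simpa only [Nat.cast_add, Nat.cast_one] using
      (summable_nat_add_iff 1).2 (summable_one_div_nat_pow.2 one_lt_two)
  refine .of_nonneg_of_le (fun k ↦ sub_nonneg.2 (hypergeomCoeff_succ_le ha hb k)) (fun k ↦ ?_)
    (hinv.mul_left (2 * K * a * b))
  have hk : (0 : ℝ) < k + 1 := by positivity
  have := hypergeomLogCoeff_sub_natCast_mul_hypergeomCoeff_le ha hb k.succ_ne_zero
  push_cast at this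
  calc K / (k + 1) - hypergeomCoeff a b (a + b) (k + 1)
      = (K - (k + 1) * hypergeomCoeff a b (a + b) (k + 1)) / (k + 1) := by field_simp
    _ ≤ 2 * K * a * b / (k + 1) / (k + 1) := by gcongr
    _ = 2 * K * a * b * (1 / ((k : ℝ) + 1) ^ 2) := by rw [div_div, ← sq, mul_one_div]

theorem hasSum_hypergeomCoeff_mul_pow (ha : 0 < a) (hb : 0 < b) {z : ℝ} (hz : z ∈ Set.Ico 0 1) :
    HasSum (fun k ↦ hypergeomCoeff a b (a + b) k * z ^ k) (hypergeomF a b (a + b) z) := by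
  rw [hypergeomF_eq_tsum ha hb (add_pos ha hb)]
  refine Summable.hasSum ((summable_nat_add_iff 1).1 ?_)
  have hlog := (hasSum_pow_div_log_of_abs_lt_one (abs_lt.2 ⟨by linarith [hz.1], hz.2⟩)).summable
  refine .of_nonneg_of_le (fun k ↦ ?_) (fun k ↦ ?_) (hlog.mul_left (hypergeomLogCoeff a b))
  · have := hypergeomCoeff_pos ha hb (add_pos ha hb) (k + 1)
    have := hz.1
    positivity
  · rw [mul_div_left_comm, mul_comm]
    exact mul_le_mul_of_nonneg_left (hypergeomCoeff_succ_le ha hb k) (pow_nonneg hz.1 _)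

/-- Subtracting the logarithmic series `-K log (1 - z) = ∑ K z^k / k` from `F` leaves
`1 - ∑ (K / k - c_k) z^k`, whose coefficients are nonnegative and summable. -/
theorem exists_abs_hypergeomF_add_mul_log_le (ha : 0 < a) (hb : 0 < b) :
    ∃ C, ∀ z ∈ Set.Ico (0 : ℝ) 1,
      |hypergeomF a b (a + b) z + hypergeomLogCoeff a b * log (1 - z)| ≤ C := by
  set K := hypergeomLogCoeff a b
  set t : ℕ → ℝ := fun k ↦ K / (k + 1) - hypergeomCoeff a b (a + b) (k + 1)
  have ht := summable_hypergeomLogCoeff_div_sub_hypergeomCoeff ha hb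
  refine ⟨1 + ∑' k, t k, fun z hz ↦ ?_⟩
  have hS : HasSum (fun k ↦ t k * z ^ (k + 1))
      (1 - (hypergeomF a b (a + b) z + K * log (1 - z))) := by
    have hlog := (hasSum_pow_div_log_of_abs_lt_one
      (abs_lt.2 ⟨by linarith [hz.1], hz.2⟩)).mul_left K
    have hF : HasSum (fun k ↦ hypergeomCoeff a b (a + b) (k + 1) * z ^ (k + 1))
        (hypergeomF a b (a + b) z - 1) := by
      simpa using (hasSum_nat_add_iff' 1).2 (hasSum_hypergeomCoeff_mul_pow ha hb hz)
    rw [show 1 - (hypergeomF a b (a + b) z + K * log (1 - z)) =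
      K * -log (1 - z) - (hypergeomF a b (a + b) z - 1) by ring]
    exact (hlog.sub hF).congr_fun fun k ↦ by ring
  have hS₀ : 0 ≤ 1 - (hypergeomF a b (a + b) z + K * log (1 - z)) :=
    hS.nonneg fun k ↦ mul_nonneg (sub_nonneg.2 (hypergeomCoeff_succ_le ha hb k)) (pow_nonneg hz.1 _)
  have hS₁ : 1 - (hypergeomF a b (a + b) z + K * log (1 - z)) ≤ ∑' k, t k :=
    hasSum_le (fun k ↦ mul_le_of_le_one_right (sub_nonneg.2 (hypergeomCoeff_succ_le ha hb k))
      (pow_le_one₀ hz.1 hz.2.le)) hS ht.hasSum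
  rw [abs_le]
  constructor <;> linarith

theorem isBigO_hypergeomF_add_mul_log (ha : 0 < a) (hb : 0 < b) :
    (fun z ↦ hypergeomF a b (a + b) z + hypergeomLogCoeff a b * log (1 - z)) =O[𝓝[<] 1]
      fun _ ↦ (1 : ℝ) := by
  obtain ⟨C, hC⟩ := exists_abs_hypergeomF_add_mul_log_le ha hb
  refine (isBigO_one_iff ℝ).2 ⟨C, eventually_map.2 ?_⟩
  filter_upwards [Ioo_mem_nhdsLT zero_lt_one] with z hz
  exact hC z (Set.Ioo_subset_Ico_self hz)

end LogarithmicCase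

theorem tendsto_log_one_sub_nhdsLT_one : Tendsto (fun z : ℝ ↦ log (1 - z)) (𝓝[<] 1) atBot := by
  refine tendsto_log_nhdsGT_zero.comp (tendsto_nhdsWithin_iff.2 ⟨?_, ?_⟩)
  · exact tendsto_nhdsWithin_of_tendsto_nhds
      (by simpa using (continuous_sub_left (1 : ℝ)).tendsto 1)
  · filter_upwards [self_mem_nhdsWithin] with z hz
    exact sub_pos.2 (Set.mem_Iio.1 hz)

/-- `(1 - √z) log (1 - z) = (1 - z) log (1 - z) / (1 + √z)`, and `x log x → 0`. -/
theorem tendsto_one_sub_sqrt_mul_log_one_sub :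
    Tendsto (fun z ↦ (1 - √z) * log (1 - z)) (𝓝[<] 1) (𝓝 0) := by
  have hxlogx : Tendsto (fun z : ℝ ↦ (1 - z) * log (1 - z)) (𝓝 1) (𝓝 0) := by
    simpa [Function.comp_def] using
      (continuous_mul_log.comp (continuous_sub_left (1 : ℝ))).tendsto 1
  have hsqrt : Tendsto (fun z : ℝ ↦ 1 + √z) (𝓝 1) (𝓝 2) := by
    simpa [one_add_one_eq_two] using
      (continuous_const.add continuous_sqrt).tendsto (1 : ℝ) (f := fun z ↦ 1 + √z)
  rw [← zero_div 2]
  refine ((hxlogx.div hsqrt two_ne_zero).mono_left nhdsWithin_le_nhds).congr' ?_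
  filter_upwards [Ioo_mem_nhdsLT zero_lt_one] with z hz
  have := sq_sqrt hz.1.le
  simp only [Pi.div_apply]
  field_simp
  linear_combination log (1 - z) * this

theorem isBigO_mul_log_one_sub_iff (p q : ℝ) :
    (fun z ↦ (p + q * √z) * log (1 - z)) =O[𝓝[<] 1] (fun _ ↦ (1 : ℝ)) ↔ p + q = 0 := by
  constructor
  · intro hO
    by_contra hpq
    have hlim : Tendsto (fun z ↦ |p + q * √z|) (𝓝[<] 1) (𝓝 |p + q|) := by
      simpa using ((continuous_const.add (continuous_const.mul continuous_sqrt)).abs.tendsto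
        (1 : ℝ) (f := fun z ↦ |p + q * √z|)).mono_left nhdsWithin_le_nhds
    refine not_isBoundedUnder_of_tendsto_atTop ?_ ((isBigO_one_iff ℝ).1 hO)
    simpa only [norm_mul, Real.norm_eq_abs, Function.comp_def] using hlim.pos_mul_atTop
      (abs_pos.2 hpq) (tendsto_abs_atBot_atTop.comp tendsto_log_one_sub_nhdsLT_one)
  · intro hpq
    refine (tendsto_one_sub_sqrt_mul_log_one_sub.const_mul p).isBigO_one ℝ |>.congr_left fun z ↦ ?_
    rw [eq_neg_of_add_eq_zero_right hpq]
    ring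

theorem isBigO_hypergeomF_add_mul_sqrt_mul_hypergeomF_iff {a₁ b₁ a₂ b₂ : ℝ} (ha₁ : 0 < a₁)
    (hb₁ : 0 < b₁) (ha₂ : 0 < a₂) (hb₂ : 0 < b₂) (α : ℝ) :
    (fun z ↦ hypergeomF a₁ b₁ (a₁ + b₁) z + α * √z * hypergeomF a₂ b₂ (a₂ + b₂) z)
      =O[𝓝[<] 1] (fun _ ↦ (1 : ℝ)) ↔
    hypergeomLogCoeff a₁ b₁ + α * hypergeomLogCoeff a₂ b₂ = 0 := by
  set K₁ := hypergeomLogCoeff a₁ b₁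
  set K₂ := hypergeomLogCoeff a₂ b₂
  set G₁ := fun z ↦ hypergeomF a₁ b₁ (a₁ + b₁) z + K₁ * log (1 - z)
  set G₂ := fun z ↦ hypergeomF a₂ b₂ (a₂ + b₂) z + K₂ * log (1 - z)
  have hG : (fun z ↦ G₁ z + α * √z * G₂ z) =O[𝓝[<] 1] (fun _ ↦ (1 : ℝ)) := by
    have hsqrt : (fun z ↦ √z) =O[𝓝[<] 1] (fun _ ↦ (1 : ℝ)) :=
      (continuous_sqrt.tendsto 1).mono_left nhdsWithin_le_nhds |>.isBigO_one ℝ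
    refine (isBigO_hypergeomF_add_mul_log ha₁ hb₁).add ?_
    simpa only [mul_assoc, mul_one] using
      (hsqrt.mul (isBigO_hypergeomF_add_mul_log ha₂ hb₂)).const_mul_left α
  rw [← isBigO_mul_log_one_sub_iff, ← hG.sub_iff_right]
  refine Iff.of_eq (congrArg (· =O[𝓝[<] 1] _) (funext fun z ↦ ?_))
  simp only [G₁, G₂]
  ring

/-- Case `n = 3`: the solution
`w(z) = F((β-1)/4,(3-β)/4,1/2;z) + α √z F((1+β)/4,(5-β)/4,3/2;z)` of the hypergeometric
problem remains bounded as `z → 1⁻` if and only if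
`α = -Γ(1/2)Γ((β+1)/4)Γ((5-β)/4)/(Γ(3/2)Γ((β-1)/4)Γ((3-β)/4)) = -H(3,β)`. -/
theorem bounded_iff_alpha_n3 (β : ℝ) (hβ : 2 ≤ β) (hβn : β < 3) (α : ℝ)
    (w : ℝ → ℝ)
    (hw : ∀ z : ℝ, w z = hypergeomF ((β - 1) / 4) ((3 - β) / 4) (1 / 2) z +
        α * Real.sqrt z * hypergeomF ((1 + β) / 4) ((5 - β) / 4) (3 / 2) z) :
    (∃ C : ℝ, ∀ᶠ z in nhdsWithin 1 (Set.Iio (1 : ℝ)), |w z| ≤ C) ↔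
      α = -(Real.Gamma (1 / 2) * Real.Gamma ((β + 1) / 4) * Real.Gamma ((5 - β) / 4)) /
          (Real.Gamma (3 / 2) * Real.Gamma ((β - 1) / 4) * Real.Gamma ((3 - β) / 4)) := by
  have ha₁ : 0 < (β - 1) / 4 := by linarith
  have hb₁ : 0 < (3 - β) / 4 := by linarith
  have ha₂ : 0 < (1 + β) / 4 := by linarith
  have hb₂ : 0 < (5 - β) / 4 := by linarith
  have hc₁ : (1 / 2 : ℝ) = (β - 1) / 4 + (3 - β) / 4 := by ring
  have hc₂ : (3 / 2 : ℝ) = (1 + β) / 4 + (5 - β) / 4 := by ring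
  have hbdd : (∃ C, ∀ᶠ z in 𝓝[<] 1, |w z| ≤ C) ↔ w =O[𝓝[<] 1] (fun _ ↦ (1 : ℝ)) := by
    simp only [isBigO_one_iff, Real.norm_eq_abs, IsBoundedUnder, IsBounded, eventually_map]
  rw [hbdd, funext hw, hc₁, hc₂,
    isBigO_hypergeomF_add_mul_sqrt_mul_hypergeomF_iff ha₁ hb₁ ha₂ hb₂, add_comm β 1]
  have := (Gamma_pos_of_pos ha₁).ne'
  have := (Gamma_pos_of_pos hb₁).ne'
  have := (Gamma_pos_of_pos ha₂).ne'
  have := (Gamma_pos_of_pos hb₂).ne'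
  have := (Gamma_pos_of_pos (add_pos ha₂ hb₂)).ne'
  rw [hypergeomLogCoeff, hypergeomLogCoeff, eq_div_iff (by positivity), ← mul_div_assoc,
    div_add_div _ _ (by positivity) (by positivity), div_eq_zero_iff, or_iff_left (by positivity)]
  constructor <;> intro h <;> linear_combination h
end

section
/- Let n ≥ 3 and define φ(x,t) = ∫₀^∞ a^{(n-4)/2} ((a+t)² + |x|²)^{-(n-2)/2} da for (x,t) ∈ ℝⁿ₊. Then φ is harmonic in ℝⁿ₊ and φ(x,0) = c_n |x|^{-(n-2)/2} for some constant c_n > 0. -/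
open Real MeasureTheory

noncomputable section KatoAux
namespace KatoAux

/-- The quadratic quantity `(a+t)² + |x|²`. -/
def Qk {m : ℕ} (a : ℝ) (p : EuclideanSpace ℝ (Fin m) × ℝ) : ℝ := (a + p.2) ^ 2 + ‖p.1‖ ^ 2

/-- The derivative of `Qk a` at `p`. -/
def Qd {m : ℕ} (a : ℝ) (p : EuclideanSpace ℝ (Fin m) × ℝ) :
    (EuclideanSpace ℝ (Fin m) × ℝ) →L[ℝ] ℝ :=
  (2 * (a + p.2)) • (ContinuousLinearMap.snd ℝ (EuclideanSpace ℝ (Fin m)) ℝ)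
    + (2 : ℝ) • ((innerSL ℝ p.1).comp (ContinuousLinearMap.fst ℝ (EuclideanSpace ℝ (Fin m)) ℝ))

variable {m : ℕ} {a : ℝ} {p v w : EuclideanSpace ℝ (Fin m) × ℝ}

lemma Qd_apply : Qd a p v = 2 * (a + p.2) * v.2 + 2 * (inner ℝ p.1 v.1 : ℝ) := by
  simp [Qd, mul_assoc]

lemma Qk_pos (h : 0 < a + p.2) : 0 < Qk a p := by
  have : (0:ℝ) < (a + p.2) ^ 2 := by positivity
  have h2 : (0:ℝ) ≤ ‖p.1‖ ^ 2 := by positivity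
  unfold Qk; linarith

lemma hasFDerivAt_Qk (a : ℝ) (p : EuclideanSpace ℝ (Fin m) × ℝ) :
    HasFDerivAt (Qk a) (Qd a p) p := by
  have h1 : HasFDerivAt (fun q : EuclideanSpace ℝ (Fin m) × ℝ => (a + q.2) ^ 2)
      ((2 * (a + p.2)) • (ContinuousLinearMap.snd ℝ (EuclideanSpace ℝ (Fin m)) ℝ)) p := by
    have h := ((hasFDerivAt_snd (p := p) (𝕜 := ℝ)).const_add a)
    have := h.mul h
    simp only [sq]
    refine this.congr_fderiv ?_
    ext w <;> simp <;> ring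
  have h2 : HasFDerivAt (fun q : EuclideanSpace ℝ (Fin m) × ℝ => ‖q.1‖ ^ 2)
      ((2:ℝ) • ((innerSL ℝ p.1).comp (ContinuousLinearMap.fst ℝ (EuclideanSpace ℝ (Fin m)) ℝ))) p := by
    have := (hasFDerivAt_fst (p := p) (𝕜 := ℝ)).norm_sq
    refine this.congr_fderiv ?_
    ext w <;> simp [two_smul]
  exact h1.add h2


/-- `F1 s α a p` is the derivative in `p` of `a^α * (Qk a p)^(-s)`. -/
def F1 {m : ℕ} (s α a : ℝ) (p : EuclideanSpace ℝ (Fin m) × ℝ) :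
    (EuclideanSpace ℝ (Fin m) × ℝ) →L[ℝ] ℝ :=
  (a ^ α * (-s * Qk a p ^ (-s - 1))) • Qd a p

/-- `F2 s α a v p` is the derivative in `p` of `fun p => F1 s α a p v`. -/
def F2 {m : ℕ} (s α a : ℝ) (v p : EuclideanSpace ℝ (Fin m) × ℝ) :
    (EuclideanSpace ℝ (Fin m) × ℝ) →L[ℝ] ℝ :=
  (a ^ α * -s) • ((Qk a p ^ (-s - 1)) • Qd 0 v
    + (Qd a p v) • (((-s - 1) * Qk a p ^ (-s - 1 - 1)) • Qd a p))

variable {s α : ℝ}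

lemma hasFDerivAt_F0 (h : 0 < a + p.2) :
    HasFDerivAt (fun q : EuclideanSpace ℝ (Fin m) × ℝ => a ^ α * Qk a q ^ (-s))
      (F1 s α a p) p := by
  have := ((hasFDerivAt_Qk a p).rpow_const (p := -s) (Or.inl (Qk_pos h).ne')).const_mul (a ^ α)
  refine this.congr_fderiv ?_
  rw [F1, smul_smul]

lemma hasFDerivAt_Qd_apply (a : ℝ) (v p : EuclideanSpace ℝ (Fin m) × ℝ) :
    HasFDerivAt (fun q : EuclideanSpace ℝ (Fin m) × ℝ => Qd a q v) (Qd 0 v) p := by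
  have heq : (fun q : EuclideanSpace ℝ (Fin m) × ℝ => Qd a q v)
      = fun q => 2 * a * v.2 + Qd 0 v q := by
    ext q
    rw [Qd_apply, Qd_apply]
    rw [real_inner_comm]
    ring
  rw [heq]
  exact ((Qd 0 v).hasFDerivAt).const_add _

lemma hasFDerivAt_F1_apply (h : 0 < a + p.2) (v : EuclideanSpace ℝ (Fin m) × ℝ) :
    HasFDerivAt (fun q : EuclideanSpace ℝ (Fin m) × ℝ => F1 s α a q v) (F2 s α a v p) p := by
  have heq : (fun q : EuclideanSpace ℝ (Fin m) × ℝ => F1 s α a q v)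
      = fun q => (a ^ α * -s) * (Qk a q ^ (-s - 1) * Qd a q v) := by
    ext q
    simp only [F1, ContinuousLinearMap.coe_smul', Pi.smul_apply, smul_eq_mul]
    ring
  rw [heq]
  have h1 : HasFDerivAt (fun q : EuclideanSpace ℝ (Fin m) × ℝ => Qk a q ^ (-s - 1))
      (((-s - 1) * Qk a p ^ (-s - 1 - 1)) • Qd a p) p :=
    (hasFDerivAt_Qk a p).rpow_const (Or.inl (Qk_pos h).ne')
  exact (h1.mul (hasFDerivAt_Qd_apply a v p)).const_mul _


lemma norm_Qd_le (a : ℝ) (p : EuclideanSpace ℝ (Fin m) × ℝ) :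
    ‖Qd a p‖ ≤ 2 * |a + p.2| + 2 * ‖p.1‖ := by
  refine ContinuousLinearMap.opNorm_le_bound _ (by positivity) fun v => ?_
  rw [Qd_apply]
  have h1 : |v.2| ≤ ‖v‖ := norm_snd_le v
  have h2 : ‖v.1‖ ≤ ‖v‖ := norm_fst_le v
  have h3 : |(inner ℝ p.1 v.1 : ℝ)| ≤ ‖p.1‖ * ‖v.1‖ := abs_real_inner_le_norm _ _
  have h4 : (0:ℝ) ≤ ‖p.1‖ := norm_nonneg _
  calc ‖2 * (a + p.2) * v.2 + 2 * (inner ℝ p.1 v.1 : ℝ)‖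
      ≤ ‖2 * (a + p.2) * v.2‖ + ‖2 * (inner ℝ p.1 v.1 : ℝ)‖ := norm_add_le _ _
    _ = 2 * |a + p.2| * |v.2| + 2 * |(inner ℝ p.1 v.1 : ℝ)| := by
        simp [Real.norm_eq_abs, abs_mul]
    _ ≤ 2 * |a + p.2| * ‖v‖ + 2 * (‖p.1‖ * ‖v.1‖) := by
        gcongr
    _ ≤ 2 * |a + p.2| * ‖v‖ + 2 * (‖p.1‖ * ‖v‖) := by gcongr
    _ = (2 * |a + p.2| + 2 * ‖p.1‖) * ‖v‖ := by ring

lemma norm_Qd_le_sqrt (h : 0 < a + p.2) :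
    ‖Qd a p‖ ≤ 4 * Qk a p ^ ((1:ℝ)/2) := by
  have hQ := Qk_pos h
  have hsq : Qk a p ^ ((1:ℝ)/2) = Real.sqrt (Qk a p) := by
    rw [Real.sqrt_eq_rpow]
  have h1 : |a + p.2| ≤ Real.sqrt (Qk a p) := by
    rw [abs_of_pos h]
    rw [show a + p.2 = Real.sqrt ((a+p.2)^2) by rw [Real.sqrt_sq h.le]]
    apply Real.sqrt_le_sqrt
    have : (0:ℝ) ≤ ‖p.1‖ ^ 2 := by positivity
    unfold Qk; linarith
  have h2 : ‖p.1‖ ≤ Real.sqrt (Qk a p) := by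
    rw [show ‖p.1‖ = Real.sqrt (‖p.1‖^2) by rw [Real.sqrt_sq (norm_nonneg _)]]
    apply Real.sqrt_le_sqrt
    have : (0:ℝ) ≤ (a + p.2) ^ 2 := by positivity
    unfold Qk; linarith
  calc ‖Qd a p‖ ≤ 2 * |a + p.2| + 2 * ‖p.1‖ := norm_Qd_le a p
    _ ≤ 2 * Real.sqrt (Qk a p) + 2 * Real.sqrt (Qk a p) := by gcongr
    _ = 4 * Qk a p ^ ((1:ℝ)/2) := by rw [hsq]; ring

lemma Qk_rpow_le {δ r : ℝ} (hδ : 0 < δ) (ha : 0 < a) (h : δ ≤ p.2) (hr : r ≤ 0) :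
    Qk a p ^ r ≤ (a + δ) ^ (2 * r) := by
  have hpos : (0:ℝ) < a + δ := by linarith
  have hb : (a + δ) ^ (2 * r) = ((a + δ) ^ (2:ℕ) : ℝ) ^ r := by
    rw [← Real.rpow_natCast (a + δ) 2, ← Real.rpow_mul hpos.le]
    norm_num
  rw [hb]
  apply Real.rpow_le_rpow_of_nonpos (by positivity) _ hr
  have h1 : (a + δ) ^ (2:ℕ) ≤ (a + p.2) ^ 2 := by nlinarith
  have h2 : (0:ℝ) ≤ ‖p.1‖ ^ 2 := by positivity
  unfold Qk; push_cast; nlinarith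


lemma integrableOn_rpow_mul_rpow {δ A B : ℝ} (hδ : 0 < δ) (hA : -1 < A) (hB : B ≤ 0)
    (hAB : A + B < -1) :
    IntegrableOn (fun a : ℝ => a ^ A * (a + δ) ^ B) (Set.Ioi 0) := by
  have hcont : ContinuousOn (fun a : ℝ => a ^ A * (a + δ) ^ B) (Set.Ioi 0) := by
    apply ContinuousOn.mul
    · intro a ha
      exact (Real.continuousAt_rpow_const a A (Or.inl (ne_of_gt ha))).continuousWithinAt
    · intro a ha
      have : (0:ℝ) < a + δ := by have := Set.mem_Ioi.mp ha; linarith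
      exact (((continuous_id.add continuous_const).continuousAt).rpow_const
        (Or.inl this.ne')).continuousWithinAt
  have hunion : Set.Ioc (0:ℝ) δ ∪ Set.Ioi δ = Set.Ioi 0 := Set.Ioc_union_Ioi_eq_Ioi hδ.le
  rw [← hunion, IntegrableOn, Measure.restrict_union (by simp [Set.disjoint_left]) measurableSet_Ioi]
  rw [integrable_add_measure]
  constructor
  · -- on Ioc 0 δ
    have hg : IntegrableOn (fun a : ℝ => δ ^ B * a ^ A) (Set.Ioc 0 δ) := by
      apply Integrable.const_mul
      have := intervalIntegral.intervalIntegrable_rpow' (a := 0) (b := δ) hA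
      rwa [intervalIntegrable_iff_integrableOn_Ioc_of_le hδ.le] at this
    refine hg.mono' ((hcont.mono ?_).aestronglyMeasurable measurableSet_Ioc) ?_
    · exact fun a ha => ha.1
    · filter_upwards [ae_restrict_mem measurableSet_Ioc] with a ha
      have ha0 : (0:ℝ) < a := ha.1
      have h1 : (a:ℝ) + δ ≥ δ := by linarith
      have h2 : (a + δ) ^ B ≤ δ ^ B := Real.rpow_le_rpow_of_nonpos hδ h1 hB
      rw [Real.norm_eq_abs, abs_of_nonneg (by positivity)]
      have : (0:ℝ) ≤ a ^ A := by positivity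
      calc a ^ A * (a + δ) ^ B ≤ a ^ A * δ ^ B := by gcongr
        _ = δ ^ B * a ^ A := by ring
  · -- on Ioi δ
    have hg : IntegrableOn (fun a : ℝ => a ^ (A + B)) (Set.Ioi δ) :=
      integrableOn_Ioi_rpow_of_lt hAB hδ
    refine hg.mono' ((hcont.mono ?_).aestronglyMeasurable measurableSet_Ioi) ?_
    · exact fun a ha => lt_trans hδ ha
    · filter_upwards [ae_restrict_mem measurableSet_Ioi] with a ha
      have ha0 : (0:ℝ) < a := lt_trans hδ ha
      rw [Real.norm_eq_abs, abs_of_nonneg (by positivity)]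
      have h2 : (a + δ) ^ B ≤ a ^ B := Real.rpow_le_rpow_of_nonpos ha0 (by linarith) hB
      calc a ^ A * (a + δ) ^ B ≤ a ^ A * a ^ B := by
            have : (0:ℝ) ≤ a ^ A := by positivity
            gcongr
        _ = a ^ (A + B) := (Real.rpow_add ha0 A B).symm


lemma continuous_Qd_a (q : EuclideanSpace ℝ (Fin m) × ℝ) :
    Continuous (fun a : ℝ => Qd a q) := by
  unfold Qd
  exact ((continuous_const.mul (continuous_id.add continuous_const)).smul
    continuous_const).add continuous_const

lemma continuousOn_Qk_rpow (q : EuclideanSpace ℝ (Fin m) × ℝ) (hq : 0 < q.2) (r : ℝ) :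
    ContinuousOn (fun a : ℝ => Qk a q ^ r) (Set.Ioi 0) := by
  apply ContinuousOn.rpow_const
  · unfold Qk
    exact (((continuous_id.add continuous_const).pow 2).add continuous_const).continuousOn
  · intro a ha
    have : 0 < a + q.2 := by have := Set.mem_Ioi.mp ha; linarith
    exact Or.inl (Qk_pos this).ne'

lemma continuousOn_rpow_id : ContinuousOn (fun a : ℝ => a ^ α) (Set.Ioi 0) := fun a ha =>
  (Real.continuousAt_rpow_const a α (Or.inl (ne_of_gt ha))).continuousWithinAt

lemma meas_F0 (q : EuclideanSpace ℝ (Fin m) × ℝ) (hq : 0 < q.2) :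
    AEStronglyMeasurable (fun a : ℝ => a ^ α * Qk a q ^ (-s))
      (volume.restrict (Set.Ioi 0)) :=
  (continuousOn_rpow_id.mul (continuousOn_Qk_rpow q hq _)).aestronglyMeasurable
    measurableSet_Ioi

lemma meas_F1 (q : EuclideanSpace ℝ (Fin m) × ℝ) (hq : 0 < q.2) :
    AEStronglyMeasurable (fun a : ℝ => F1 s α a q) (volume.restrict (Set.Ioi 0)) := by
  unfold F1
  exact ContinuousOn.smul
    (continuousOn_rpow_id.mul ((continuousOn_Qk_rpow q hq _).const_smul (-s)))
    ((continuous_Qd_a q).continuousOn) |>.aestronglyMeasurable measurableSet_Ioi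

lemma ball_snd_ge {δ : ℝ} (hδp : δ + δ ≤ p.2) {q : EuclideanSpace ℝ (Fin m) × ℝ}
    (hq : q ∈ Metric.ball p δ) : δ ≤ q.2 := by
  have h1 : ‖(q - p).2‖ ≤ ‖q - p‖ := norm_snd_le (q - p)
  have h2 : |q.2 - p.2| < δ := by
    rw [Metric.mem_ball, dist_eq_norm] at hq
    simpa [Real.norm_eq_abs] using lt_of_le_of_lt h1 hq
  have := abs_sub_lt_iff.mp h2
  linarith [this.2]

lemma norm_F1_le {δ : ℝ} (hδ : 0 < δ) (ha : 0 < a) (hq : δ ≤ p.2) (hs : 0 < s) :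
    ‖F1 s α a p‖ ≤ (4 * s) * (a ^ α * (a + δ) ^ (-(2*s+1))) := by
  have haq : 0 < a + p.2 := by linarith
  have hQ := Qk_pos haq
  rw [F1]
  refine le_trans (le_of_eq (norm_smul (a ^ α * (-s * Qk a p ^ (-s - 1))) (Qd a p))) ?_
  have h1 : ‖a ^ α * (-s * Qk a p ^ (-s - 1))‖ = a ^ α * (s * Qk a p ^ (-s - 1)) := by
    rw [Real.norm_eq_abs, abs_mul, abs_of_nonneg (by positivity), abs_mul, abs_neg,
      abs_of_nonneg hs.le, abs_of_nonneg (by positivity)]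
  rw [h1]
  calc a ^ α * (s * Qk a p ^ (-s - 1)) * ‖Qd a p‖
      ≤ a ^ α * (s * Qk a p ^ (-s - 1)) * (4 * Qk a p ^ ((1:ℝ)/2)) := by
        have : (0:ℝ) ≤ a ^ α * (s * Qk a p ^ (-s - 1)) := by positivity
        exact mul_le_mul_of_nonneg_left (norm_Qd_le_sqrt haq) this
    _ = (4 * s) * (a ^ α * (Qk a p ^ (-s - 1) * Qk a p ^ ((1:ℝ)/2))) := by ring
    _ = (4 * s) * (a ^ α * Qk a p ^ ((-s - 1) + 1/2)) := by
        rw [← Real.rpow_add hQ]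
    _ ≤ (4 * s) * (a ^ α * (a + δ) ^ (2 * ((-s - 1) + 1/2))) := by
        have hb := Qk_rpow_le (p := p) hδ ha hq (r := (-s - 1) + 1/2) (by linarith)
        have : (0:ℝ) ≤ a ^ α := by positivity
        have h4s : (0:ℝ) ≤ 4 * s := by linarith
        gcongr
    _ = (4 * s) * (a ^ α * (a + δ) ^ (-(2*s+1))) := by ring_nf

lemma norm_F0_le {δ : ℝ} (hδ : 0 < δ) (ha : 0 < a) (hq : δ ≤ p.2) (hs : 0 < s) :
    ‖a ^ α * Qk a p ^ (-s)‖ ≤ a ^ α * (a + δ) ^ (-(2*s)) := by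
  have haq : 0 < a + p.2 := by linarith
  have hQ := Qk_pos haq
  rw [Real.norm_eq_abs, abs_mul, abs_of_nonneg (by positivity), abs_of_nonneg (by positivity)]
  have hb := Qk_rpow_le (p := p) hδ ha hq (r := -s) (by linarith)
  have : (0:ℝ) ≤ a ^ α := by positivity
  calc a ^ α * Qk a p ^ (-s) ≤ a ^ α * (a + δ) ^ (2 * -s) := by gcongr
    _ = a ^ α * (a + δ) ^ (-(2*s)) := by ring_nf

lemma stage1 (hs : 0 < s) (hα : -1 < α) (hI : α - 2*s < -1)
    (p : EuclideanSpace ℝ (Fin m) × ℝ) (hp : 0 < p.2) :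
    HasFDerivAt (fun q : EuclideanSpace ℝ (Fin m) × ℝ =>
        ∫ a in Set.Ioi (0:ℝ), a ^ α * Qk a q ^ (-s))
      (∫ a in Set.Ioi (0:ℝ), F1 s α a p) p ∧
    Integrable (fun a => F1 s α a p) (volume.restrict (Set.Ioi 0)) := by
  set δ := p.2/2 with hδdef
  have hδ : 0 < δ := by positivity
  have hδp : δ + δ ≤ p.2 := by rw [hδdef]; ring_nf; rfl
  have hqball : ∀ q ∈ Metric.ball p δ, δ ≤ q.2 := fun q hq => ball_snd_ge hδp hq
  have hbound_int : Integrable (fun a : ℝ => (4 * s) * (a ^ α * (a + δ) ^ (-(2*s+1))))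
      (volume.restrict (Set.Ioi 0)) :=
    (integrableOn_rpow_mul_rpow hδ hα (by linarith) (by linarith)).const_mul _
  have hF'_meas : AEStronglyMeasurable (fun a : ℝ => F1 s α a p)
      (volume.restrict (Set.Ioi 0)) := meas_F1 p hp
  have h_bound : ∀ᵐ a ∂(volume.restrict (Set.Ioi 0)), ∀ q ∈ Metric.ball p δ,
      ‖F1 s α a q‖ ≤ (4 * s) * (a ^ α * (a + δ) ^ (-(2*s+1))) := by
    filter_upwards [ae_restrict_mem measurableSet_Ioi] with a ha q hq
    exact norm_F1_le hδ (Set.mem_Ioi.mp ha) (hqball q hq) hs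
  have h_diff : ∀ᵐ a ∂(volume.restrict (Set.Ioi 0)), ∀ q ∈ Metric.ball p δ,
      HasFDerivAt (fun q : EuclideanSpace ℝ (Fin m) × ℝ => a ^ α * Qk a q ^ (-s))
        (F1 s α a q) q := by
    filter_upwards [ae_restrict_mem measurableSet_Ioi] with a ha q hq
    have : 0 < a + q.2 := by have h1 := hqball q hq; have := Set.mem_Ioi.mp ha; linarith
    exact hasFDerivAt_F0 this
  have hF1_int : Integrable (fun a => F1 s α a p) (volume.restrict (Set.Ioi 0)) := by
    refine hbound_int.mono' hF'_meas ?_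
    filter_upwards [ae_restrict_mem measurableSet_Ioi] with a ha
    exact norm_F1_le hδ (Set.mem_Ioi.mp ha) (by linarith) hs
  refine ⟨?_, hF1_int⟩
  apply hasFDerivAt_integral_of_dominated_of_fderiv_le (F' := fun q a => F1 s α a q)
    (bound := fun a => (4 * s) * (a ^ α * (a + δ) ^ (-(2*s+1)))) (Metric.ball_mem_nhds p hδ) ?_ ?_ hF'_meas h_bound
    hbound_int h_diff
  · filter_upwards [Metric.ball_mem_nhds p hδ] with q hq
    have : 0 < q.2 := lt_of_lt_of_le hδ (hqball q hq)
    exact meas_F0 q this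
  · refine Integrable.mono' ((integrableOn_rpow_mul_rpow (A := α) (B := -(2*s)) hδ hα
      (by linarith) (by linarith))) (meas_F0 p hp) ?_
    filter_upwards [ae_restrict_mem measurableSet_Ioi] with a ha
    exact norm_F0_le hδ (Set.mem_Ioi.mp ha) (by linarith) hs


lemma norm_smul_clm (c : ℝ) (L : (EuclideanSpace ℝ (Fin m) × ℝ) →L[ℝ] ℝ) :
    ‖c • L‖ = ‖c‖ * ‖L‖ := norm_smul c L

lemma norm_F2_le {δ : ℝ} {v : EuclideanSpace ℝ (Fin m) × ℝ} (hδ : 0 < δ) (ha : 0 < a)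
    (hq : δ ≤ p.2) (hs : 0 < s) (hv : ‖v‖ ≤ 1) :
    ‖F2 s α a v p‖ ≤ (s * (4 + 16 * (s + 1))) * (a ^ α * (a + δ) ^ (-(2*s+2))) := by
  have haq : 0 < a + p.2 := by linarith
  have hQ := Qk_pos haq
  have hsqrt := norm_Qd_le_sqrt haq
  have hQdv : ‖Qd a p v‖ ≤ 4 * Qk a p ^ ((1:ℝ)/2) := by
    calc ‖Qd a p v‖ ≤ ‖Qd a p‖ * ‖v‖ := (Qd a p).le_opNorm v
      _ ≤ (4 * Qk a p ^ ((1:ℝ)/2)) * 1 := by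
          apply mul_le_mul hsqrt hv (norm_nonneg _) (by positivity)
      _ = 4 * Qk a p ^ ((1:ℝ)/2) := by ring
  have hQd0 : ‖Qd 0 v‖ ≤ 4 := by
    have h1 : |(0:ℝ) + v.2| ≤ ‖v‖ := by simpa using norm_snd_le v
    have h2 : ‖v.1‖ ≤ ‖v‖ := norm_fst_le v
    calc ‖Qd 0 v‖ ≤ 2 * |(0:ℝ) + v.2| + 2 * ‖v.1‖ := norm_Qd_le 0 v
      _ ≤ 2 * ‖v‖ + 2 * ‖v‖ := by gcongr
      _ ≤ 4 := by linarith
  have hT1 : ‖(Qk a p ^ (-s - 1)) • Qd 0 v‖ ≤ Qk a p ^ (-s - 1) * 4 := by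
    rw [norm_smul_clm]
    rw [Real.norm_eq_abs, abs_of_nonneg (by positivity)]
    exact mul_le_mul_of_nonneg_left hQd0 (by positivity)
  have hT2 : ‖(Qd a p v) • (((-s - 1) * Qk a p ^ (-s - 1 - 1)) • Qd a p)‖
      ≤ (4 * Qk a p ^ ((1:ℝ)/2)) * ((s + 1) * Qk a p ^ (-s - 1 - 1) * (4 * Qk a p ^ ((1:ℝ)/2))) := by
    rw [show ‖(Qd a p v) • (((-s - 1) * Qk a p ^ (-s - 1 - 1)) • Qd a p)‖
        = ‖Qd a p v‖ * ‖((-s - 1) * Qk a p ^ (-s - 1 - 1)) • Qd a p‖ from norm_smul_clm _ _]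
    have hinner : ‖((-s - 1) * Qk a p ^ (-s - 1 - 1)) • Qd a p‖
        ≤ (s + 1) * Qk a p ^ (-s - 1 - 1) * (4 * Qk a p ^ ((1:ℝ)/2)) := by
      rw [norm_smul_clm]
      rw [Real.norm_eq_abs, abs_mul, abs_of_nonneg (by positivity : (0:ℝ) ≤ Qk a p ^ (-s-1-1)),
        show (-s - 1 : ℝ) = -(s+1) by ring, abs_neg, abs_of_pos (by linarith : (0:ℝ) < s + 1)]
      exact mul_le_mul_of_nonneg_left hsqrt (by positivity)
    exact mul_le_mul hQdv hinner (norm_nonneg _) (by positivity)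
  have hcomb : Qk a p ^ ((1:ℝ)/2) * Qk a p ^ (-s - 1 - 1) * Qk a p ^ ((1:ℝ)/2)
      = Qk a p ^ (-s - 1) := by
    rw [← Real.rpow_add hQ, ← Real.rpow_add hQ]
    congr 1
    ring
  have hfinal : Qk a p ^ (-s - 1) ≤ (a + δ) ^ (-(2*s+2)) := by
    have := Qk_rpow_le (p := p) hδ ha hq (r := -s - 1) (by linarith)
    calc Qk a p ^ (-s - 1) ≤ (a + δ) ^ (2 * (-s - 1)) := this
      _ = (a + δ) ^ (-(2*s+2)) := by ring_nf
  unfold F2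
  rw [norm_smul_clm]
  refine le_trans (mul_le_mul_of_nonneg_left (norm_add_le _ _) (norm_nonneg _)) ?_
  have hnc : ‖a ^ α * -s‖ = a ^ α * s := by
    rw [Real.norm_eq_abs, abs_mul, abs_of_nonneg (by positivity), abs_neg, abs_of_pos hs]
  rw [hnc]
  calc a ^ α * s * (‖(Qk a p ^ (-s - 1)) • Qd 0 v‖
        + ‖(Qd a p v) • (((-s - 1) * Qk a p ^ (-s - 1 - 1)) • Qd a p)‖)
      ≤ a ^ α * s * ((Qk a p ^ (-s - 1) * 4)
        + (4 * Qk a p ^ ((1:ℝ)/2)) * ((s + 1) * Qk a p ^ (-s - 1 - 1) * (4 * Qk a p ^ ((1:ℝ)/2)))) := by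
        have : (0:ℝ) ≤ a ^ α * s := by positivity
        exact mul_le_mul_of_nonneg_left (add_le_add hT1 hT2) this
    _ = a ^ α * s * (4 * Qk a p ^ (-s - 1)
        + 16 * (s + 1) * (Qk a p ^ ((1:ℝ)/2) * Qk a p ^ (-s - 1 - 1) * Qk a p ^ ((1:ℝ)/2))) := by
        ring
    _ = (s * (4 + 16 * (s + 1))) * (a ^ α * Qk a p ^ (-s - 1)) := by rw [hcomb]; ring
    _ ≤ (s * (4 + 16 * (s + 1))) * (a ^ α * (a + δ) ^ (-(2*s+2))) := by
        have h1 : (0:ℝ) ≤ s * (4 + 16 * (s + 1)) := by positivity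
        have h2 : (0:ℝ) ≤ a ^ α := by positivity
        gcongr

lemma meas_F1_apply (q v : EuclideanSpace ℝ (Fin m) × ℝ) (hq : 0 < q.2) :
    AEStronglyMeasurable (fun a : ℝ => F1 s α a q v) (volume.restrict (Set.Ioi 0)) := by
  have heq : (fun a : ℝ => F1 s α a q v)
      = fun a => (a ^ α * (-s * Qk a q ^ (-s - 1))) * (2 * (a + q.2) * v.2
          + 2 * (inner ℝ q.1 v.1 : ℝ)) := by
    ext a
    simp only [F1, ContinuousLinearMap.coe_smul', Pi.smul_apply, smul_eq_mul, Qd_apply]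
  rw [heq]
  refine ContinuousOn.aestronglyMeasurable ?_ measurableSet_Ioi
  apply ContinuousOn.mul
  · exact continuousOn_rpow_id.mul ((continuousOn_Qk_rpow q hq _).const_smul (-s))
  · apply Continuous.continuousOn
    continuity

lemma meas_F2 (q v : EuclideanSpace ℝ (Fin m) × ℝ) (hq : 0 < q.2) :
    AEStronglyMeasurable (fun a : ℝ => F2 s α a v q) (volume.restrict (Set.Ioi 0)) := by
  unfold F2
  refine ContinuousOn.aestronglyMeasurable ?_ measurableSet_Ioi
  have hqdv : Continuous (fun a : ℝ => Qd a q v) := by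
    have heq : (fun a : ℝ => Qd a q v)
        = fun a => 2 * (a + q.2) * v.2 + 2 * (inner ℝ q.1 v.1 : ℝ) := funext fun a => Qd_apply
    rw [heq]; continuity
  refine ContinuousOn.smul ((continuousOn_rpow_id.mul continuousOn_const)) ?_
  refine ContinuousOn.add ?_ ?_
  · exact (continuousOn_Qk_rpow q hq _).smul continuousOn_const
  · exact hqdv.continuousOn.smul
      (((continuousOn_Qk_rpow q hq _).const_smul (-s-1)).smul (continuous_Qd_a q).continuousOn)

lemma stage2 (hs : 0 < s) (hα : -1 < α) (hI : α - 2*s < -1)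
    (v : EuclideanSpace ℝ (Fin m) × ℝ) (hv : ‖v‖ ≤ 1)
    (p : EuclideanSpace ℝ (Fin m) × ℝ) (hp : 0 < p.2) :
    HasFDerivAt (fun q : EuclideanSpace ℝ (Fin m) × ℝ =>
        ∫ a in Set.Ioi (0:ℝ), F1 s α a q v)
      (∫ a in Set.Ioi (0:ℝ), F2 s α a v p) p ∧
    Integrable (fun a => F2 s α a v p) (volume.restrict (Set.Ioi 0)) := by
  set δ := p.2/2 with hδdef
  have hδ : 0 < δ := by positivity
  have hδp : δ + δ ≤ p.2 := by rw [hδdef]; ring_nf; rfl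
  have hqball : ∀ q ∈ Metric.ball p δ, δ ≤ q.2 := fun q hq => ball_snd_ge hδp hq
  have hbound_int : Integrable
      (fun a : ℝ => (s * (4 + 16 * (s + 1))) * (a ^ α * (a + δ) ^ (-(2*s+2))))
      (volume.restrict (Set.Ioi 0)) :=
    (integrableOn_rpow_mul_rpow hδ hα (by linarith) (by linarith)).const_mul _
  have hF'_meas : AEStronglyMeasurable (fun a : ℝ => F2 s α a v p)
      (volume.restrict (Set.Ioi 0)) := meas_F2 p v hp
  have h_bound : ∀ᵐ a ∂(volume.restrict (Set.Ioi 0)), ∀ q ∈ Metric.ball p δ,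
      ‖F2 s α a v q‖ ≤ (s * (4 + 16 * (s + 1))) * (a ^ α * (a + δ) ^ (-(2*s+2))) := by
    filter_upwards [ae_restrict_mem measurableSet_Ioi] with a ha q hq
    exact norm_F2_le hδ (Set.mem_Ioi.mp ha) (hqball q hq) hs hv
  have h_diff : ∀ᵐ a ∂(volume.restrict (Set.Ioi 0)), ∀ q ∈ Metric.ball p δ,
      HasFDerivAt (fun q : EuclideanSpace ℝ (Fin m) × ℝ => F1 s α a q v)
        (F2 s α a v q) q := by
    filter_upwards [ae_restrict_mem measurableSet_Ioi] with a ha q hq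
    have : 0 < a + q.2 := by have h1 := hqball q hq; have := Set.mem_Ioi.mp ha; linarith
    exact hasFDerivAt_F1_apply this v
  have hF2_int : Integrable (fun a => F2 s α a v p) (volume.restrict (Set.Ioi 0)) := by
    refine hbound_int.mono' hF'_meas ?_
    filter_upwards [ae_restrict_mem measurableSet_Ioi] with a ha
    exact norm_F2_le hδ (Set.mem_Ioi.mp ha) (by linarith) hs hv
  refine ⟨?_, hF2_int⟩
  apply hasFDerivAt_integral_of_dominated_of_fderiv_le (F' := fun q a => F2 s α a v q)
    (bound := fun a => (s * (4 + 16 * (s + 1))) * (a ^ α * (a + δ) ^ (-(2*s+2)))) (Metric.ball_mem_nhds p hδ) ?_ ?_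
    hF'_meas h_bound hbound_int h_diff
  · filter_upwards [Metric.ball_mem_nhds p hδ] with q hq
    have : 0 < q.2 := lt_of_lt_of_le hδ (hqball q hq)
    exact meas_F1_apply q v this
  · refine Integrable.mono' ((integrableOn_rpow_mul_rpow (A := α) (B := -(2*s+1)) hδ hα
      (by linarith) (by linarith)).const_mul (4*s)) (meas_F1_apply p v hp) ?_
    filter_upwards [ae_restrict_mem measurableSet_Ioi] with a ha
    calc ‖F1 s α a p v‖ ≤ ‖F1 s α a p‖ * ‖v‖ := (F1 s α a p).le_opNorm v
      _ ≤ ((4 * s) * (a ^ α * (a + δ) ^ (-(2*s+1)))) * 1 := by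
          apply mul_le_mul (norm_F1_le hδ (Set.mem_Ioi.mp ha) (by linarith) hs) hv
            (norm_nonneg _) ?_
          have : 0 < a := Set.mem_Ioi.mp ha
          positivity
      _ = (4 * s) * (a ^ α * (a + δ) ^ (-(2*s+1))) := by ring


lemma F2_apply (v w : EuclideanSpace ℝ (Fin m) × ℝ) :
    F2 s α a v p w = (a ^ α * -s) * (Qk a p ^ (-s-1) * (Qd 0 v w)
      + Qd a p v * ((-s-1) * Qk a p ^ (-s-1-1) * (Qd a p w))) := by
  simp only [F2, ContinuousLinearMap.add_apply, ContinuousLinearMap.coe_smul', Pi.smul_apply,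
    smul_eq_mul]
  try ring

lemma norm_sq_eucl (x : EuclideanSpace ℝ (Fin m)) : ‖x‖ ^ 2 = ∑ i, (x i) ^ 2 := by
  rw [EuclideanSpace.norm_eq, Real.sq_sqrt (by positivity)]
  simp [Real.norm_eq_abs, sq_abs]

lemma sum_F2_diag_eq_zero (hs2 : 2 * s = (m:ℝ) - 1) (hQ : 0 < Qk a p) :
    (∑ i : Fin m, F2 s α a (EuclideanSpace.single i 1, (0:ℝ)) p (EuclideanSpace.single i 1, 0))
      + F2 s α a ((0 : EuclideanSpace ℝ (Fin m)), (1:ℝ)) p (0, 1) = 0 := by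
  have hQd_single : ∀ i : Fin m, Qd a p ((EuclideanSpace.single i 1 : EuclideanSpace ℝ (Fin m)),
      (0:ℝ)) = 2 * p.1 i := by
    intro i
    rw [Qd_apply]
    simp [EuclideanSpace.inner_single_right]
  have hQd0_single : ∀ i : Fin m, Qd 0 ((EuclideanSpace.single i 1 : EuclideanSpace ℝ (Fin m)),
      (0:ℝ)) ((EuclideanSpace.single i 1 : EuclideanSpace ℝ (Fin m)), (0:ℝ)) = 2 := by
    intro i
    rw [Qd_apply]
    simp [EuclideanSpace.inner_single_right]
  have hQd_t : Qd a p ((0 : EuclideanSpace ℝ (Fin m)), (1:ℝ)) = 2 * (a + p.2) := by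
    rw [Qd_apply]; simp
  have hQd0_t : Qd 0 ((0 : EuclideanSpace ℝ (Fin m)), (1:ℝ))
      ((0 : EuclideanSpace ℝ (Fin m)), (1:ℝ)) = 2 := by
    rw [Qd_apply]; simp
  set X := a ^ α * -s with hX
  set A := Qk a p ^ (-s-1-1) with hA
  have hpow : Qk a p ^ (-s-1) = A * Qk a p := by
    rw [hA, ← Real.rpow_add_one hQ.ne']
    congr 1
    ring
  have hterm : ∀ i : Fin m,
      F2 s α a (EuclideanSpace.single i 1, (0:ℝ)) p (EuclideanSpace.single i 1, 0)
      = X * (A * Qk a p * 2) + (X * ((-s-1) * A * 4)) * (p.1 i) ^ 2 := by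
    intro i
    rw [F2_apply, hQd0_single i, hQd_single i, hpow]
    try ring
  have hsum : (∑ i : Fin m, F2 s α a (EuclideanSpace.single i 1, (0:ℝ)) p
      (EuclideanSpace.single i 1, 0))
      = (m:ℝ) * (X * (A * Qk a p * 2)) + (X * ((-s-1) * A * 4)) * ‖p.1‖ ^ 2 := by
    rw [Finset.sum_congr rfl fun i _ => hterm i, Finset.sum_add_distrib, Finset.sum_const,
      Finset.card_univ, ← Finset.mul_sum, norm_sq_eucl]
    simp [nsmul_eq_mul]
  have hterm_t : F2 s α a ((0 : EuclideanSpace ℝ (Fin m)), (1:ℝ)) p (0, 1)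
      = X * (A * Qk a p * 2) + (X * ((-s-1) * A * 4)) * (a + p.2) ^ 2 := by
    rw [F2_apply, hQd0_t, hQd_t, hpow]
    try ring
  rw [hsum, hterm_t]
  have hQk : Qk a p = (a + p.2) ^ 2 + ‖p.1‖ ^ 2 := rfl
  rw [hQk]
  linear_combination (-2 * X * A * ((a + p.2) ^ 2 + ‖p.1‖ ^ 2)) * hs2


/-- The boundary constant. -/
def cInt (s α : ℝ) : ℝ := ∫ b in Set.Ioi (0:ℝ), b ^ α * (b ^ 2 + 1) ^ (-s)

lemma cInt_integrand_cont : ContinuousOn (fun b : ℝ => b ^ α * (b ^ 2 + 1) ^ (-s))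
    (Set.Ioi 0) := by
  apply ContinuousOn.mul continuousOn_rpow_id
  apply ContinuousOn.rpow_const ((continuous_pow 2).add continuous_const).continuousOn
  intro b _
  refine Or.inl (by show b ^ 2 + 1 ≠ 0; positivity)

lemma cInt_integrable (hs : 0 < s) (hα : -1 < α) (hI : α - 2*s < -1) :
    IntegrableOn (fun b : ℝ => b ^ α * (b ^ 2 + 1) ^ (-s)) (Set.Ioi 0) := by
  refine Integrable.mono'
    ((integrableOn_rpow_mul_rpow (δ := 1) (A := α) (B := -(2*s)) one_pos hα
      (by linarith) (by linarith)).const_mul (2 ^ s))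
    (cInt_integrand_cont.aestronglyMeasurable measurableSet_Ioi) ?_
  filter_upwards [ae_restrict_mem measurableSet_Ioi] with b hb
  have hb0 : (0:ℝ) < b := Set.mem_Ioi.mp hb
  rw [Real.norm_eq_abs, abs_of_nonneg (by positivity)]
  have key : (b ^ 2 + 1) ^ (-s) ≤ 2 ^ s * (b + 1) ^ (-(2*s)) := by
    have h1 : ((b + 1) ^ (2:ℕ) / 2 : ℝ) ≤ b ^ 2 + 1 := by nlinarith [sq_nonneg (b - 1)]
    have h2 : (0:ℝ) < (b + 1) ^ (2:ℕ) / 2 := by positivity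
    have h3 := Real.rpow_le_rpow_of_nonpos h2 h1 (by linarith : -s ≤ 0)
    calc (b ^ 2 + 1) ^ (-s) ≤ ((b + 1) ^ (2:ℕ) / 2) ^ (-s) := h3
      _ = ((b + 1) ^ (2:ℕ)) ^ (-s) / 2 ^ (-s) :=
          Real.div_rpow (by positivity) (by norm_num : (0:ℝ) ≤ 2) (-s)
      _ = 2 ^ s * (b + 1) ^ (-(2*s)) := by
          rw [← Real.rpow_natCast (b+1) 2, ← Real.rpow_mul (by positivity : (0:ℝ) ≤ b + 1),
            Real.rpow_neg (by norm_num : (0:ℝ) ≤ 2), div_eq_mul_inv, inv_inv,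
            show ((2:ℕ):ℝ) * -s = -(2*s) by push_cast; ring]
          ring
  calc b ^ α * (b ^ 2 + 1) ^ (-s) ≤ b ^ α * (2 ^ s * (b + 1) ^ (-(2*s))) := by
        have : (0:ℝ) ≤ b ^ α := by positivity
        exact mul_le_mul_of_nonneg_left key this
    _ = 2 ^ s * (b ^ α * (b + 1) ^ (-(2*s))) := by ring

lemma cInt_pos (hs : 0 < s) (hα : -1 < α) (hI : α - 2*s < -1) : 0 < cInt s α := by
  have hnn : 0 ≤ᵐ[volume.restrict (Set.Ioi (0:ℝ))]
      fun b : ℝ => b ^ α * (b ^ 2 + 1) ^ (-s) := by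
    filter_upwards [ae_restrict_mem measurableSet_Ioi] with b hb
    have : (0:ℝ) < b := Set.mem_Ioi.mp hb
    positivity
  rw [cInt, setIntegral_pos_iff_support_of_nonneg_ae hnn (cInt_integrable hs hα hI)]
  have hsub : Set.Ioi (0:ℝ)
      ⊆ (Function.support fun b : ℝ => b ^ α * (b ^ 2 + 1) ^ (-s)) ∩ Set.Ioi 0 := by
    intro b hb
    have hb0 : (0:ℝ) < b := hb
    exact ⟨(by positivity : (0:ℝ) < b ^ α * (b ^ 2 + 1) ^ (-s)).ne', hb⟩
  calc (0 : ENNReal) < volume (Set.Ioi (0:ℝ)) := by rw [Real.volume_Ioi]; simp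
    _ ≤ _ := measure_mono hsub

lemma boundary_value (hs : 0 < s) (hα : -1 < α) (hI : α - 2*s < -1)
    (x : EuclideanSpace ℝ (Fin m)) (hx : x ≠ 0) :
    ∫ a in Set.Ioi (0:ℝ), a ^ α * (a ^ 2 + ‖x‖ ^ 2) ^ (-s)
      = cInt s α * ‖x‖ ^ (1 + (α + 2 * -s)) := by
  set r := ‖x‖ with hr
  have hr0 : 0 < r := norm_pos_iff.mpr hx
  have hcv := MeasureTheory.integral_comp_mul_left_Ioi
    (fun a => a ^ α * (a ^ 2 + r ^ 2) ^ (-s)) 0 hr0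
  simp only [mul_zero] at hcv
  have h1 : (∫ b in Set.Ioi (0:ℝ), (r * b) ^ α * ((r * b) ^ 2 + r ^ 2) ^ (-s))
      = r ^ (α + 2 * -s) * cInt s α := by
    rw [show (∫ b in Set.Ioi (0:ℝ), (r * b) ^ α * ((r * b) ^ 2 + r ^ 2) ^ (-s))
        = ∫ b in Set.Ioi (0:ℝ), r ^ (α + 2 * -s) * (b ^ α * (b ^ 2 + 1) ^ (-s)) from ?_,
      MeasureTheory.integral_const_mul]
    · rfl
    · apply MeasureTheory.setIntegral_congr_fun measurableSet_Ioi
      intro b hb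
      have hb0 : (0:ℝ) < b := hb
      have e1 : (r * b) ^ α = r ^ α * b ^ α := Real.mul_rpow hr0.le hb0.le
      have e2 : ((r * b) ^ 2 + r ^ 2 : ℝ) = r ^ 2 * (b ^ 2 + 1) := by ring
      have e3 : (r ^ 2 * (b ^ 2 + 1) : ℝ) ^ (-s)
          = (r ^ 2 : ℝ) ^ (-s) * (b ^ 2 + 1) ^ (-s) :=
        Real.mul_rpow (by positivity) (by positivity)
      have e4 : ((r ^ 2 : ℝ)) ^ (-s) = r ^ (2 * -s) := by
        rw [← Real.rpow_natCast r 2, ← Real.rpow_mul hr0.le]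
        norm_num
      have e5 : r ^ α * r ^ (2 * -s) = r ^ (α + 2 * -s) := (Real.rpow_add hr0 _ _).symm
      simp only [e1, e2, e3, e4]
      rw [← e5]
      ring
  rw [h1] at hcv
  have hI2 : (∫ a in Set.Ioi (0:ℝ), a ^ α * (a ^ 2 + r ^ 2) ^ (-s))
      = r * (r ^ (α + 2 * -s) * cInt s α) := by
    rw [hcv, smul_eq_mul, ← mul_assoc, mul_inv_cancel₀ hr0.ne', one_mul]
  rw [hI2, show r * (r ^ (α + 2 * -s) * cInt s α)
      = (r ^ (1:ℝ) * r ^ (α + 2 * -s)) * cInt s α by rw [Real.rpow_one]; ring,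
    ← Real.rpow_add hr0]
  ring

end KatoAux

/-- The Laplacian in `ℝⁿ = ℝ^{n-1} × ℝ`. -/
noncomputable def halfLaplacian (m : ℕ) (u : (EuclideanSpace ℝ (Fin m) × ℝ) → ℝ)
    (p : EuclideanSpace ℝ (Fin m) × ℝ) : ℝ :=
  (∑ i : Fin m, fderiv ℝ (fun q => fderiv ℝ u q (EuclideanSpace.single i 1, 0)) p
      (EuclideanSpace.single i 1, 0)) +
    fderiv ℝ (fun q => fderiv ℝ u q (0, 1)) p (0, 1)

open KatoAux in
/-- The superposition `φ(x,t) = ∫₀^∞ a^{(n-4)/2} ((a+t)² + |x|²)^{-(n-2)/2} da` is harmonic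
in `ℝⁿ₊` and has boundary values `φ(x,0) = c_n |x|^{-(n-2)/2}` for some constant `c_n > 0`. -/
theorem kato_extremal_superposition (n : ℕ) (hn : 3 ≤ n)
    (φ : (EuclideanSpace ℝ (Fin (n - 1)) × ℝ) → ℝ)
    (hφ : ∀ p : EuclideanSpace ℝ (Fin (n - 1)) × ℝ,
      φ p = ∫ a in Set.Ioi (0 : ℝ),
        a ^ (((n : ℝ) - 4) / 2) * ((a + p.2) ^ 2 + ‖p.1‖ ^ 2) ^ (-(((n : ℝ) - 2) / 2))) :
    (∀ p : EuclideanSpace ℝ (Fin (n - 1)) × ℝ, 0 < p.2 → halfLaplacian (n - 1) φ p = 0) ∧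
      ∃ c : ℝ, 0 < c ∧ ∀ x : EuclideanSpace ℝ (Fin (n - 1)), x ≠ 0 →
        φ (x, 0) = c * ‖x‖ ^ (-(((n : ℝ) - 2) / 2)) := by
  have hn3 : (3:ℝ) ≤ (n:ℝ) := by exact_mod_cast hn
  set s : ℝ := ((n : ℝ) - 2) / 2 with hsdef
  set α : ℝ := ((n : ℝ) - 4) / 2 with hαdef
  have hs : 0 < s := by rw [hsdef]; linarith
  have hα : -1 < α := by rw [hαdef]; linarith
  have hI : α - 2 * s < -1 := by rw [hαdef, hsdef]; linarith
  have hm : ((n - 1 : ℕ) : ℝ) = (n : ℝ) - 1 := by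
    have h1 : 1 ≤ n := by omega
    push_cast [h1]
    ring
  have hs2 : 2 * s = ((n - 1 : ℕ) : ℝ) - 1 := by rw [hm, hsdef]; ring
  have hφeq : φ = fun q : EuclideanSpace ℝ (Fin (n - 1)) × ℝ =>
      ∫ a in Set.Ioi (0:ℝ), a ^ α * Qk a q ^ (-s) := by
    funext q
    rw [hφ q]
    rfl
  constructor
  · -- harmonicity
    intro p hp
    have hmem : {q : EuclideanSpace ℝ (Fin (n - 1)) × ℝ | 0 < q.2} ∈ nhds p :=
      (isOpen_lt continuous_const continuous_snd).mem_nhds hp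
    have hstep : ∀ v : EuclideanSpace ℝ (Fin (n - 1)) × ℝ, ‖v‖ ≤ 1 →
        fderiv ℝ (fun q => fderiv ℝ φ q v) p v
          = ∫ a in Set.Ioi (0:ℝ), F2 s α a v p v := by
      intro v hv
      have hEv : (fun q => fderiv ℝ φ q v)
          =ᶠ[nhds p] fun q => ∫ a in Set.Ioi (0:ℝ), F1 s α a q v := by
        filter_upwards [hmem] with q hq
        have h1 := stage1 hs hα hI q hq
        rw [hφeq, h1.1.fderiv]
        exact ContinuousLinearMap.integral_apply h1.2 v
      have h2 := stage2 hs hα hI v hv p hp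
      rw [hEv.fderiv_eq, h2.1.fderiv]
      exact ContinuousLinearMap.integral_apply h2.2 v
    have hnorm1 : ∀ i : Fin (n - 1),
        ‖((EuclideanSpace.single i 1 : EuclideanSpace ℝ (Fin (n - 1))), (0:ℝ))‖ ≤ 1 := by
      intro i
      rw [Prod.norm_def]
      simp [EuclideanSpace.norm_single]
    have hnorm2 : ‖((0 : EuclideanSpace ℝ (Fin (n - 1))), (1:ℝ))‖ ≤ 1 := by
      rw [Prod.norm_def]
      simp
    unfold halfLaplacian
    rw [Finset.sum_congr rfl fun i _ => hstep _ (hnorm1 i), hstep _ hnorm2]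
    have hint : ∀ v : EuclideanSpace ℝ (Fin (n - 1)) × ℝ, ‖v‖ ≤ 1 →
        Integrable (fun a => F2 s α a v p v) (volume.restrict (Set.Ioi 0)) := fun v hv =>
      (stage2 hs hα hI v hv p hp).2.apply_continuousLinearMap v
    rw [← MeasureTheory.integral_finset_sum _ fun i _ => hint _ (hnorm1 i),
      ← MeasureTheory.integral_add
        (MeasureTheory.integrable_finset_sum _ fun i _ => hint _ (hnorm1 i))
        (hint _ hnorm2)]
    have hzero : Set.EqOn
        (fun a : ℝ => (∑ i : Fin (n - 1), F2 s α a (EuclideanSpace.single i 1, (0:ℝ)) p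
            (EuclideanSpace.single i 1, 0)) + F2 s α a ((0 : EuclideanSpace ℝ (Fin (n-1))), (1:ℝ)) p (0, 1))
        (fun _ : ℝ => (0:ℝ)) (Set.Ioi 0) := by
      intro a ha
      have ha0 : (0:ℝ) < a := ha
      have hQ : 0 < Qk a p := Qk_pos (by linarith : (0:ℝ) < a + p.2)
      exact sum_F2_diag_eq_zero hs2 hQ
    rw [MeasureTheory.setIntegral_congr_fun measurableSet_Ioi hzero, integral_zero]
  · -- boundary value
    refine ⟨cInt s α, cInt_pos hs hα hI, fun x hx => ?_⟩
    rw [hφeq]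
    have hb := boundary_value hs hα hI x hx
    have hexp : 1 + (α + 2 * -s) = -(((n:ℝ) - 2) / 2) := by
      rw [hαdef, hsdef]; ring
    calc (∫ a in Set.Ioi (0:ℝ), a ^ α * Qk a (x, (0:ℝ)) ^ (-s))
        = ∫ a in Set.Ioi (0:ℝ), a ^ α * (a ^ 2 + ‖x‖ ^ 2) ^ (-s) := by
          apply MeasureTheory.setIntegral_congr_fun measurableSet_Ioi
          intro a _
          show a ^ α * ((a + 0) ^ 2 + ‖x‖ ^ 2) ^ (-s) = a ^ α * (a ^ 2 + ‖x‖ ^ 2) ^ (-s)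
          norm_num
      _ = cInt s α * ‖x‖ ^ (1 + (α + 2 * -s)) := hb
      _ = cInt s α * ‖x‖ ^ (-(((n:ℝ) - 2) / 2)) := by rw [hexp]
end KatoAux
end
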